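/- arXiv:math/0607441 — 2 statements merged into one kernel-verified Lean document; each statement's English description precedes it below -/
import Mathlib

section
/- Let Y be a set of type 2 whose spine contains the point x, and let P be a plane in ℝ³. Then D_{x,r}(Y,P) > 1/3 for every r > 0. -/
noncomputable section

open Metric Set

/-- Euclidean 3-space. -/
abbrev E3 := EuclideanSpace ℝ (Fin 3)

/-- The normalized local Hausdorff distance `D_{x,r}(E,F)`. -/
noncomputable def relDist (x : E3) (r : ℝ) (E F : Set E3) : ℝ :=
  r⁻¹ * max (sSup ((fun z => Metric.infDist z F) '' (E ∩ ball x r)))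
            (sSup ((fun z => Metric.infDist z E) '' (F ∩ ball x r)))

/-- `R` is the composition of a translation and a rotation of `ℝ³`. -/
def IsRigidMotion (R : E3 → E3) : Prop :=
  ∃ (f : E3 ≃ₗᵢ[ℝ] E3) (v : E3),
    LinearMap.det (f.toLinearEquiv.toLinearMap) = 1 ∧ ∀ x, R x = f x + v

/-- Sets of type 1 : planes (2-dimensional affine subspaces of `ℝ³`). -/
def IsType1 (Z : Set E3) : Prop :=
  ∃ P : AffineSubspace ℝ E3, Module.finrank ℝ P.direction = 2 ∧ Z = (P : Set E3)

/-- The standard propeller `Prop × ℝ ⊆ ℝ³`. -/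
def YBase : Set E3 :=
  {x | (0 ≤ x 0 ∧ x 1 = 0) ∨ (x 0 ≤ 0 ∧ x 1 = -Real.sqrt 3 * x 0) ∨
       (x 0 ≤ 0 ∧ x 1 = Real.sqrt 3 * x 0)}

/-- The spine `{x₁ = x₂ = 0}` of the standard set of type 2. -/
def YSpineBase : Set E3 := {x | x 0 = 0 ∧ x 1 = 0}

/-- The three faces of the standard set of type 2. -/
def YFaceBase : Fin 3 → Set E3 :=
  ![{x | 0 ≤ x 0 ∧ x 1 = 0},
    {x | x 0 ≤ 0 ∧ x 1 = -Real.sqrt 3 * x 0},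
    {x | x 0 ≤ 0 ∧ x 1 = Real.sqrt 3 * x 0}]

/-- Sets of type 2. -/
def IsType2 (Y : Set E3) : Prop := ∃ R, IsRigidMotion R ∧ Y = R '' YBase

/-- `Y` is a set of type 2 with spine `L`. -/
def Type2Spine (Y L : Set E3) : Prop :=
  ∃ R, IsRigidMotion R ∧ Y = R '' YBase ∧ L = R '' YSpineBase

/-- The four vertices of the regular tetrahedron. -/
noncomputable def tA : Fin 4 → E3 :=
  ![(WithLp.equiv 2 (Fin 3 → ℝ)).symm ![1, 0, 0],
    (WithLp.equiv 2 (Fin 3 → ℝ)).symm ![-(1/3), 2 * Real.sqrt 2 / 3, 0],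
    (WithLp.equiv 2 (Fin 3 → ℝ)).symm ![-(1/3), -(Real.sqrt 2 / 3), Real.sqrt 6 / 3],
    (WithLp.equiv 2 (Fin 3 → ℝ)).symm ![-(1/3), -(Real.sqrt 2 / 3), -(Real.sqrt 6 / 3)]]

/-- The standard set `T₀` of type 3 : the cone over the six edges of the tetrahedron. -/
def TBase : Set E3 :=
  {x | ∃ t : ℝ, 0 ≤ t ∧ ∃ i j : Fin 4, i ≠ j ∧ ∃ z ∈ segment ℝ (tA i) (tA j), x = t • z}

/-- The spine of `T₀` : the four half lines `[0, Aⱼ)`. -/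
def TSpineBase : Set E3 := {x | ∃ t : ℝ, 0 ≤ t ∧ ∃ j : Fin 4, x = t • tA j}

/-- The face of `T₀` over the edge `[Aᵢ, Aⱼ]`. -/
def TFaceBase (i j : Fin 4) : Set E3 :=
  {x | ∃ t : ℝ, 0 ≤ t ∧ ∃ z ∈ segment ℝ (tA i) (tA j), x = t • z}

/-- Sets of type 3. -/
def IsType3 (T : Set E3) : Prop := ∃ R, IsRigidMotion R ∧ T = R '' TBase

/-- `T` is a set of type 3 centered at `c`. -/
def Type3Center (T : Set E3) (c : E3) : Prop :=
  ∃ R, IsRigidMotion R ∧ T = R '' TBase ∧ c = R 0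

/-- `T` is a set of type 3 with spine `L`. -/
def Type3Spine (T L : Set E3) : Prop :=
  ∃ R, IsRigidMotion R ∧ T = R '' TBase ∧ L = R '' TSpineBase

/-- `T` is a set of type 3 centered at `c` with spine `L`. -/
def Type3CenterSpine (T : Set E3) (c : E3) (L : Set E3) : Prop :=
  ∃ R, IsRigidMotion R ∧ T = R '' TBase ∧ c = R 0 ∧ L = R '' TSpineBase

/-- Minimal cones : sets of type 1, 2 or 3. -/
def MinimalCone (Z : Set E3) : Prop := IsType1 Z ∨ IsType2 Z ∨ IsType3 Z

/-- The standing assumption : `E ⊆ ℝ³` is compact, contains the origin,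
`0 < ε < 10⁻²⁵`, and `E` is `ε`-close to a minimal cone through `x` in every
ball `B(x,r) ⊆ B(0,2)` centered on `E`. -/
def Standing (E : Set E3) (ε : ℝ) : Prop :=
  IsCompact E ∧ (0 : E3) ∈ E ∧ 0 < ε ∧ ε < (10 : ℝ) ^ (-25 : ℤ) ∧
    ∀ x ∈ E ∩ ball (0 : E3) 2, ∀ r : ℝ, 0 < r → ball x r ⊆ ball (0 : E3) 2 →
      ∃ Z, MinimalCone Z ∧ x ∈ Z ∧ relDist x r E Z ≤ ε

/-- `a(x,r)`. -/
noncomputable def aNum (E : Set E3) (x : E3) (r : ℝ) : ℝ :=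
  sInf {t | ∃ P, IsType1 P ∧ x ∈ P ∧ t = relDist x r E P}

/-- `b(x,r)`. -/
noncomputable def bNum (E : Set E3) (x : E3) (r : ℝ) : ℝ :=
  sInf {t | ∃ Y L, Type2Spine Y L ∧ x ∈ L ∧ t = relDist x r E Y}

/-- `c(x,r)`. -/
noncomputable def cNum (E : Set E3) (x : E3) (r : ℝ) : ℝ :=
  sInf {t | ∃ T, Type3Center T x ∧ t = relDist x r E T}

/-- `E₁` : the points of type 1. -/
def Eset1 (E : Set E3) (ε : ℝ) : Set E3 :=
  {x | x ∈ E ∩ ball (0 : E3) 2 ∧ ∃ r₀ > 0, ∀ r : ℝ, 0 < r → r < r₀ → aNum E x r ≤ 2 * ε}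

/-- `E₂` : the points of type 2. -/
def Eset2 (E : Set E3) (ε : ℝ) : Set E3 :=
  {x | x ∈ E ∩ ball (0 : E3) 2 ∧ ∃ r₀ > 0, ∀ r : ℝ, 0 < r → r < r₀ → bNum E x r ≤ 1500 * ε}

/-- `E₃` : the points of type 3. -/
def Eset3 (E : Set E3) (ε : ℝ) : Set E3 :=
  {x | x ∈ E ∩ ball (0 : E3) 2 ∧ ∃ r₀ > 0, ∀ r : ℝ, 0 < r → r < r₀ → cNum E x r ≤ 150 * ε}

/-! Let `n` be a unit normal of the plane and `x` a point of the spine. Besides the three blades,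
`Y` contains both spine directions through `x`, so it contains the points `x + ρ wᵢ`, `ρ < r`, for
five unit vectors `wᵢ` summing to zero with `∑ ⟪m, wᵢ⟫² ≥ 3/2 ‖m‖²` for every `m`. The signed
distances `d + ρ ⟪n, wᵢ⟫` of these points to the plane then have mean square at least
`(3/10) ρ²`, and `√(3/10) > 1/3`. -/

open scoped RealInnerProductSpace

lemma infDist_le_mul_relDist {x z : E3} {r : ℝ} {E F : Set E3} (hr : 0 < r)
    (hz : z ∈ E ∩ ball x r) : infDist z F ≤ r * relDist x r E F := by
  have hbdd : BddAbove ((fun z => infDist z F) '' (E ∩ ball x r)) := by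
    refine ⟨infDist x F + r, ?_⟩
    rintro _ ⟨y, ⟨-, hy⟩, rfl⟩
    linarith [infDist_le_infDist_add_dist (x := y) (y := x) (s := F), mem_ball.mp hy]
  rw [relDist, ← mul_assoc, mul_inv_cancel₀ hr.ne', one_mul]
  exact (le_csSup hbdd ⟨z, hz, rfl⟩).trans (le_max_left _ _)

lemma abs_inner_sub_le_infDist {V : Type*} [NormedAddCommGroup V] [InnerProductSpace ℝ V]
    {Q : AffineSubspace ℝ V} {n p : V} (z : V) (hn : n ∈ Q.directionᗮ) (hn1 : ‖n‖ ≤ 1)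
    (hp : p ∈ Q) : |⟪n, z - p⟫| ≤ infDist z Q := by
  refine (le_infDist ⟨p, hp⟩).2 fun y hy => ?_
  have hyp : ⟪n, y - p⟫ = 0 :=
    Submodule.inner_left_of_mem_orthogonal (AffineSubspace.vsub_mem_direction hy hp) hn
  calc |⟪n, z - p⟫| = |⟪n, z - y⟫| := by
        rw [← sub_add_sub_cancel z y p, inner_add_right, hyp, add_zero]
    _ ≤ ‖n‖ * ‖z - y‖ := abs_real_inner_le_norm _ _
    _ ≤ dist z y := by rw [dist_eq_norm]; exact mul_le_of_le_one_left (norm_nonneg _) hn1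

lemma AffineSubspace.exists_mem_orthogonal_norm_eq_one {V : Type*} [NormedAddCommGroup V]
    [InnerProductSpace ℝ V] [FiniteDimensional ℝ V] {Q : AffineSubspace ℝ V}
    (hQ : Module.finrank ℝ Q.direction < Module.finrank ℝ V) :
    ∃ n ∈ Q.directionᗮ, ‖n‖ = 1 := by
  have hne : Q.directionᗮ ≠ ⊥ := by
    intro h
    have := Submodule.finrank_add_finrank_orthogonal Q.direction
    rw [h, finrank_bot] at this
    omega
  obtain ⟨n, hn, hn0⟩ := Submodule.exists_mem_ne_zero_of_ne_bot hne
  exact ⟨‖n‖⁻¹ • n, Submodule.smul_mem _ _ hn, norm_smul_inv_norm hn0⟩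

lemma IsType1.exists_abs_inner_sub_le_infDist {P : Set E3} (hP : IsType1 P) :
    ∃ n p : E3, ‖n‖ = 1 ∧ ∀ z, |⟪n, z - p⟫| ≤ infDist z P := by
  obtain ⟨Q, hQ, rfl⟩ := hP
  obtain ⟨p, hp⟩ : (Q : Set E3).Nonempty := by
    rw [AffineSubspace.nonempty_iff_ne_bot]
    rintro rfl
    rw [AffineSubspace.direction_bot, finrank_bot] at hQ
    omega
  obtain ⟨n, hnQ, hn⟩ :=
    Q.exists_mem_orthogonal_norm_eq_one (by rw [hQ, finrank_euclideanSpace_fin]; norm_num)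
  exact ⟨n, p, hn, fun z => abs_inner_sub_le_infDist z hnQ hn.le hp⟩

lemma sq_mul_sum_sq_le_card_mul_sq {ι : Type*} [Fintype ι] {d ρ S : ℝ} {t : ι → ℝ}
    (ht : ∑ i, t i = 0) (h : ∀ i, |d + ρ * t i| ≤ S) :
    ρ ^ 2 * ∑ i, t i ^ 2 ≤ Fintype.card ι * S ^ 2 := by
  have hexpand : ∑ i, (d + ρ * t i) ^ 2 = Fintype.card ι * d ^ 2 + ρ ^ 2 * ∑ i, t i ^ 2 := by
    simp only [add_sq, Finset.sum_add_distrib, mul_pow, ← Finset.mul_sum, Finset.sum_const,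
      Finset.card_univ, nsmul_eq_mul]
    rw [ht]; ring
  have hle : ∑ i, (d + ρ * t i) ^ 2 ≤ ∑ _i : ι, S ^ 2 :=
    Finset.sum_le_sum fun i _ => sq_le_sq' (abs_le.1 (h i)).1 (abs_le.1 (h i)).2
  rw [Finset.sum_const, Finset.card_univ, nsmul_eq_mul] at hle
  nlinarith [sq_nonneg d, (Nat.cast_nonneg (Fintype.card ι) : (0:ℝ) ≤ _)]

/-- The three blade directions of `YBase`, followed by the two directions of its spine. -/
def propellerDir : Fin 5 → E3 :=
  ![!₂[1, 0, 0], !₂[-(1 / 2), √3 / 2, 0], !₂[-(1 / 2), -(√3 / 2), 0], !₂[0, 0, 1], !₂[0, 0, -1]]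

lemma norm_propellerDir (i : Fin 5) : ‖propellerDir i‖ = 1 := by
  have hs3 : √3 ^ 2 = 3 := Real.sq_sqrt (by norm_num)
  rw [← pow_eq_one_iff_of_nonneg (norm_nonneg _) two_ne_zero, EuclideanSpace.real_norm_sq_eq]
  fin_cases i <;> simp [propellerDir, Fin.sum_univ_three] <;> linarith

lemma sum_inner_propellerDir (m : E3) : ∑ i, ⟪m, propellerDir i⟫ = 0 := by
  simp [propellerDir, Fin.sum_univ_five, PiLp.inner_apply, Fin.sum_univ_three]
  ring

lemma sum_inner_propellerDir_sq (m : E3) : 3 / 2 * ‖m‖ ^ 2 ≤ ∑ i, ⟪m, propellerDir i⟫ ^ 2 := by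
  have hs3 : √3 ^ 2 = 3 := Real.sq_sqrt (by norm_num)
  simp [propellerDir, Fin.sum_univ_five, PiLp.inner_apply, Fin.sum_univ_three,
    EuclideanSpace.real_norm_sq_eq]
  nlinarith [sq_nonneg (m 2)]

lemma add_smul_propellerDir_mem_YBase {x : E3} (hx : x ∈ YSpineBase) {t : ℝ} (ht : 0 ≤ t)
    (i : Fin 5) : x + t • propellerDir i ∈ YBase := by
  obtain ⟨hx0, hx1⟩ := hx
  fin_cases i <;> simp [YBase, propellerDir, hx0, hx1]
  · exact Or.inl ht
  · exact Or.inr (Or.inl ⟨ht, by ring⟩)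
  · exact Or.inr (Or.inr ⟨ht, by ring⟩)

lemma Type2Spine.exists_add_smul_mem {Y L : Set E3} {x : E3} (hY : Type2Spine Y L) (hx : x ∈ L) :
    ∃ f : E3 ≃ₗᵢ[ℝ] E3, ∀ t : ℝ, 0 ≤ t → ∀ i, x + t • f (propellerDir i) ∈ Y := by
  obtain ⟨R, ⟨f, v, -, hR⟩, rfl, rfl⟩ := hY
  obtain ⟨x₀, hx₀, rfl⟩ := hx
  refine ⟨f, fun t ht i => ⟨x₀ + t • propellerDir i, add_smul_propellerDir_mem_YBase hx₀ ht i, ?_⟩⟩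
  rw [hR, hR, map_add, map_smul, add_right_comm]

/-- Lemma 3.1 (2.8): a set of type 2 whose spine contains `x` is at normalized
Hausdorff distance more than `1/3` from every plane, at every scale. -/
theorem stmt3 (Y L P : Set E3) (x : E3)
    (hY : Type2Spine Y L) (hx : x ∈ L) (hP : IsType1 P) :
    ∀ r : ℝ, 0 < r → 1 / 3 < relDist x r Y P := by
  intro r hr
  obtain ⟨n, p, hn, hnP⟩ := hP.exists_abs_inner_sub_le_infDist
  obtain ⟨f, hf⟩ := hY.exists_add_smul_mem hx
  have hρ : 0 ≤ 9 / 10 * r := by positivity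
  have hbound : ∀ i, |⟪n, x - p⟫ + 9 / 10 * r * ⟪f.symm n, propellerDir i⟫| ≤ r * relDist x r Y P :=
    fun i => calc
      _ = |⟪n, x + (9 / 10 * r) • f (propellerDir i) - p⟫| := by
        rw [add_sub_right_comm, inner_add_right, real_inner_smul_right,
          ← f.inner_map_map (f.symm n), f.apply_symm_apply]
      _ ≤ infDist (x + (9 / 10 * r) • f (propellerDir i)) P := hnP _
      _ ≤ r * relDist x r Y P := by
        refine infDist_le_mul_relDist hr ⟨hf _ hρ i, ?_⟩
        rw [mem_ball, dist_self_add_left, norm_smul, f.norm_map, norm_propellerDir, mul_one,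
          Real.norm_of_nonneg hρ]
        linarith
  have hvar := sq_mul_sum_sq_le_card_mul_sq (sum_inner_propellerDir _) hbound
  have hspread := sum_inner_propellerDir_sq (f.symm n)
  rw [f.symm.norm_map, hn] at hspread
  rw [Fintype.card_fin] at hvar
  have hD : 0 ≤ relDist x r Y P :=
    nonneg_of_mul_nonneg_right ((abs_nonneg _).trans (hbound 0)) hr
  -- `(9/10)² · (3/2) / 5 = 243/1000 > 1/9`
  have hsq : 243 / 1000 * r ^ 2 ≤ relDist x r Y P ^ 2 * r ^ 2 := by
    push_cast at hvar
    nlinarith [sq_nonneg r]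
  nlinarith [le_of_mul_le_mul_right hsq (by positivity)]
end
end

section
/- Assume the standing assumption. Then E₃ ∩ B(0, 199/100) contains at most one point. -/
noncomputable section

open Metric Set

/- ======================= Auxiliary development ======================= -/

open RealInnerProductSpace

namespace Stmt13Aux

/-! ### Concrete coordinate facts -/

noncomputable def mkE3 (a b c : ℝ) : E3 := (WithLp.equiv 2 (Fin 3 → ℝ)).symm ![a, b, c]

lemma inner_mkE3_left (v : E3) (a b c : ℝ) : ⟪v, mkE3 a b c⟫ = v 0 * a + v 1 * b + v 2 * c := by
  simp [mkE3, PiLp.inner_apply, Fin.sum_univ_three]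
  ring

lemma inner_mkE3_right (v : E3) (a b c : ℝ) : ⟪mkE3 a b c, v⟫ = a * v 0 + b * v 1 + c * v 2 := by
  rw [real_inner_comm, inner_mkE3_left]; ring

lemma inner_mkE3 (a b c a' b' c' : ℝ) : ⟪mkE3 a b c, mkE3 a' b' c'⟫ = a*a' + b*b' + c*c' := by
  simp [mkE3, PiLp.inner_apply, Fin.sum_univ_three]
  ring

lemma norm_sq_E3 (v : E3) : ‖v‖^2 = v 0 ^2 + v 1 ^2 + v 2 ^2 := by
  rw [← real_inner_self_eq_norm_sq, PiLp.inner_apply, Fin.sum_univ_three]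
  simp [RCLike.inner_apply]

lemma norm_mkE3_one (a b c : ℝ) (h : a^2 + b^2 + c^2 = 1) : ‖mkE3 a b c‖ = 1 := by
  have h2 : ‖mkE3 a b c‖^2 = 1 := by
    rw [norm_sq_E3]
    simpa [mkE3] using h
  nlinarith [norm_nonneg (mkE3 a b c)]

lemma tA0 : tA 0 = mkE3 1 0 0 := rfl
lemma tA1 : tA 1 = mkE3 (-(1/3)) (2 * Real.sqrt 2 / 3) 0 := rfl
lemma tA2 : tA 2 = mkE3 (-(1/3)) (-(Real.sqrt 2 / 3)) (Real.sqrt 6 / 3) := rfl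
lemma tA3 : tA 3 = mkE3 (-(1/3)) (-(Real.sqrt 2 / 3)) (-(Real.sqrt 6 / 3)) := rfl

lemma sqrt2_sq : Real.sqrt 2 ^ 2 = 2 := Real.sq_sqrt (by norm_num)
lemma sqrt3_sq : Real.sqrt 3 ^ 2 = 3 := Real.sq_sqrt (by norm_num)
lemma sqrt6_sq : Real.sqrt 6 ^ 2 = 6 := Real.sq_sqrt (by norm_num)
lemma sqrt6_eq : Real.sqrt 6 = Real.sqrt 2 * Real.sqrt 3 := by
  rw [show (6:ℝ) = 2*3 by norm_num, Real.sqrt_mul (by norm_num)]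

lemma sum_tA : ∑ i : Fin 4, tA i = 0 := by
  rw [Fin.sum_univ_four, tA0, tA1, tA2, tA3]
  ext j
  fin_cases j <;>
    simp [mkE3] <;> ring

lemma frame_tA (v : E3) : ∑ i : Fin 4, ⟪v, tA i⟫ ^ 2 = (4/3) * ‖v‖^2 := by
  rw [Fin.sum_univ_four, norm_sq_E3, tA0, tA1, tA2, tA3]
  rw [inner_mkE3_left, inner_mkE3_left, inner_mkE3_left, inner_mkE3_left]
  nlinarith [sqrt2_sq, sqrt6_sq, sq_nonneg (v 0), sq_nonneg (v 1), sq_nonneg (v 2)]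

lemma norm_tA (i : Fin 4) : ‖tA i‖ = 1 := by
  fin_cases i
  · show ‖tA 0‖ = 1
    rw [tA0]; apply norm_mkE3_one; norm_num
  · show ‖tA 1‖ = 1
    rw [tA1]; apply norm_mkE3_one; nlinarith [sqrt2_sq]
  · show ‖tA 2‖ = 1
    rw [tA2]; apply norm_mkE3_one; nlinarith [sqrt2_sq, sqrt6_sq]
  · show ‖tA 3‖ = 1
    rw [tA3]; apply norm_mkE3_one; nlinarith [sqrt2_sq, sqrt6_sq]

/-! ### face normals -/

def fc : Fin 6 → Fin 4 × Fin 4 := ![(0,1), (0,2), (0,3), (1,2), (1,3), (2,3)]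

noncomputable def nrm : Fin 6 → E3 :=
  ![mkE3 0 0 1,
    mkE3 0 (-(Real.sqrt 3/2)) (-(1/2)),
    mkE3 0 (-(Real.sqrt 3/2)) (1/2),
    mkE3 (Real.sqrt 6/3) (Real.sqrt 3/6) (1/2),
    mkE3 (Real.sqrt 6/3) (Real.sqrt 3/6) (-(1/2)),
    mkE3 (Real.sqrt 6/3) (-(Real.sqrt 3/3)) 0]

lemma nrm_unit : ∀ l, ‖nrm l‖ = 1 := by
  intro l
  fin_cases l <;>
    · show ‖mkE3 _ _ _‖ = 1
      apply norm_mkE3_one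
      nlinarith [sqrt2_sq, sqrt3_sq, sqrt6_sq]

lemma nrm_perp1 : ∀ l, ⟪nrm l, tA (fc l).1⟫ = 0 := by
  intro l
  fin_cases l
  · show ⟪mkE3 0 0 1, tA 0⟫ = 0
    rw [tA0, inner_mkE3]; ring
  · show ⟪mkE3 0 (-(Real.sqrt 3/2)) (-(1/2)), tA 0⟫ = 0
    rw [tA0, inner_mkE3]; ring
  · show ⟪mkE3 0 (-(Real.sqrt 3/2)) (1/2), tA 0⟫ = 0
    rw [tA0, inner_mkE3]; ring
  · show ⟪mkE3 (Real.sqrt 6/3) (Real.sqrt 3/6) (1/2), tA 1⟫ = 0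
    rw [tA1, inner_mkE3, sqrt6_eq]; ring
  · show ⟪mkE3 (Real.sqrt 6/3) (Real.sqrt 3/6) (-(1/2)), tA 1⟫ = 0
    rw [tA1, inner_mkE3, sqrt6_eq]; ring
  · show ⟪mkE3 (Real.sqrt 6/3) (-(Real.sqrt 3/3)) 0, tA 2⟫ = 0
    rw [tA2, inner_mkE3, sqrt6_eq]; ring

lemma nrm_perp2 : ∀ l, ⟪nrm l, tA (fc l).2⟫ = 0 := by
  intro l
  fin_cases l
  · show ⟪mkE3 0 0 1, tA 1⟫ = 0
    rw [tA1, inner_mkE3]; ring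
  · show ⟪mkE3 0 (-(Real.sqrt 3/2)) (-(1/2)), tA 2⟫ = 0
    rw [tA2, inner_mkE3, sqrt6_eq]; ring
  · show ⟪mkE3 0 (-(Real.sqrt 3/2)) (1/2), tA 3⟫ = 0
    rw [tA3, inner_mkE3, sqrt6_eq]; ring
  · show ⟪mkE3 (Real.sqrt 6/3) (Real.sqrt 3/6) (1/2), tA 2⟫ = 0
    rw [tA2, inner_mkE3, sqrt6_eq]; ring
  · show ⟪mkE3 (Real.sqrt 6/3) (Real.sqrt 3/6) (-(1/2)), tA 3⟫ = 0
    rw [tA3, inner_mkE3, sqrt6_eq]; ring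
  · show ⟪mkE3 (Real.sqrt 6/3) (-(Real.sqrt 3/3)) 0, tA 3⟫ = 0
    rw [tA3, inner_mkE3, sqrt6_eq]; ring

lemma fc_lookup : ∀ i j : Fin 4, i ≠ j → ∃ l, fc l = (i, j) ∨ fc l = (j, i) := by decide

lemma TBase_cover : ∀ w ∈ TBase, ∃ l, ⟪nrm l, w⟫ = 0 := by
  rintro w ⟨t, ht, i, j, hij, z, hz, rfl⟩
  obtain ⟨a, b, ha, hb, hab, rfl⟩ := hz
  obtain ⟨l, hl⟩ := fc_lookup i j hij
  refine ⟨l, ?_⟩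
  have p1 := nrm_perp1 l
  have p2 := nrm_perp2 l
  rw [inner_smul_right, inner_add_right, inner_smul_right, inner_smul_right]
  rcases hl with hl | hl <;> rw [hl] at p1 p2
  · have p1' : ⟪nrm l, tA i⟫ = 0 := p1
    have p2' : ⟪nrm l, tA j⟫ = 0 := p2
    rw [p1', p2']; ring
  · have p1' : ⟪nrm l, tA j⟫ = 0 := p1
    have p2' : ⟪nrm l, tA i⟫ = 0 := p2
    rw [p1', p2']; ring

noncomputable def mY : Fin 3 → E3 :=
  ![mkE3 0 1 0, mkE3 (Real.sqrt 3/2) (1/2) 0, mkE3 (Real.sqrt 3/2) (-(1/2)) 0]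

lemma mY_unit : ∀ l, ‖mY l‖ = 1 := by
  intro l
  fin_cases l <;>
    · show ‖mkE3 _ _ _‖ = 1
      apply norm_mkE3_one
      nlinarith [sqrt3_sq]

lemma YBase_cover : ∀ w ∈ YBase, ∃ l : Fin 3, ⟪mY l, w⟫ = 0 := by
  intro w hw
  rcases hw with ⟨_, h⟩ | ⟨_, h⟩ | ⟨_, h⟩
  · exact ⟨0, by rw [show mY 0 = mkE3 0 1 0 from rfl, inner_mkE3_right, h]; ring⟩
  · exact ⟨1, by rw [show mY 1 = mkE3 (Real.sqrt 3/2) (1/2) 0 from rfl, inner_mkE3_right, h]; ring⟩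
  · exact ⟨2, by rw [show mY 2 = mkE3 (Real.sqrt 3/2) (-(1/2)) 0 from rfl, inner_mkE3_right, h]; ring⟩


/-! ### abstract frame algebra -/

lemma frame_polar (u : Fin 4 → E3)
    (hframe : ∀ v : E3, ∑ i : Fin 4, ⟪v, u i⟫ ^ 2 = (4/3) * ‖v‖^2)
    (v w : E3) : ∑ i : Fin 4, ⟪v, u i⟫ * ⟪w, u i⟫ = (4/3) * ⟪v, w⟫ := by
  have h1 := hframe (v + w)
  have h2 := hframe (v - w)
  simp only [inner_add_left, inner_sub_left] at h1 h2
  rw [norm_add_sq_real] at h1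
  rw [norm_sub_sq_real] at h2
  rw [Fin.sum_univ_four] at h1 h2 ⊢
  linear_combination h1/4 - h2/4

lemma alg2 (u : Fin 4 → E3)
    (hframe : ∀ v : E3, ∑ i : Fin 4, ⟪v, u i⟫ ^ 2 = (4/3) * ‖v‖^2)
    (hu : ∀ i, ‖u i‖ = 1)
    (n : E3) (hn : ‖n‖ = 1) (η : ℝ)
    (a b c : Fin 4) (hab : a ≠ b) (hac : a ≠ c) (hbc : b ≠ c)
    (ha : |⟪n, u a⟫| ≤ η) (hb : |⟪n, u b⟫| ≤ η) (hc : |⟪n, u c⟫| ≤ η) :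
    1/3 ≤ η := by
  have hη0 : 0 ≤ η := le_trans (abs_nonneg _) ha
  have sq_le : ∀ x : ℝ, |x| ≤ η → x^2 ≤ η^2 := fun x h => by
    nlinarith [sq_abs x, abs_nonneg x]
  have CS : ∀ i, ⟪n, u i⟫^2 ≤ 1 := fun i => by
    have h := abs_real_inner_le_norm n (u i)
    rw [hn, hu i] at h
    nlinarith [sq_abs ⟪n, u i⟫, abs_nonneg ⟪n, u i⟫]
  have hf := hframe n
  rw [hn] at hf
  set s : Finset (Fin 4) := {a, b, c} with hs
  have hbcm : b ∉ ({c} : Finset (Fin 4)) := by simp [hbc]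
  have ham : a ∉ ({b, c} : Finset (Fin 4)) := by simp [hab, hac]
  have hsum_s : ∑ i ∈ s, ⟪n, u i⟫^2 = ⟪n, u a⟫^2 + ⟪n, u b⟫^2 + ⟪n, u c⟫^2 := by
    rw [hs, Finset.sum_insert ham, Finset.sum_insert hbcm, Finset.sum_singleton]; ring
  have hcard : sᶜ.card = 1 := by
    rw [Finset.card_compl]
    rw [hs, Finset.card_insert_of_notMem ham, Finset.card_insert_of_notMem hbcm,
      Finset.card_singleton]
    rfl
  have hcomp : ∑ i ∈ sᶜ, ⟪n, u i⟫^2 ≤ 1 := by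
    calc ∑ i ∈ sᶜ, ⟪n, u i⟫^2 ≤ ∑ _i ∈ sᶜ, (1:ℝ) := Finset.sum_le_sum (fun i _ => CS i)
    _ = 1 := by rw [Finset.sum_const, hcard]; simp
  have hsplit : ∑ i ∈ s, ⟪n, u i⟫^2 + ∑ i ∈ sᶜ, ⟪n, u i⟫^2 = 4/3 := by
    rw [Finset.sum_add_sum_compl, hf]; ring
  nlinarith [sq_le _ ha, sq_le _ hb, sq_le _ hc, hsum_s, hcomp, hsplit, hη0]

lemma alg_pair (gl gm gj gk nl nm nj nk W η κ P : ℝ)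
    (hS : gl*nl + gm*nm + gj*nj + gk*nk = (4/3) * P)
    (hN : nl + nm + nj + nk = 0)
    (hP : |P| ≤ κ)
    (hgl : |gl| ≤ W) (hgm : |gm| ≤ W) (hgj : |gj| ≤ W) (hgk : |gk| ≤ W)
    (hnj : |nj| ≤ η) (hnk : |nk| ≤ η)
    (hnl : 4/5 ≤ |nl|) :
    |gl - gm| ≤ 5/3*κ + 5*η*W := by
  have hW0 : 0 ≤ W := le_trans (abs_nonneg _) hgl
  have hη0 : 0 ≤ η := le_trans (abs_nonneg _) hnj
  have key : nl * (gl - gm) = (4/3)*P - gj*nj - gk*nk + gm*(nj+nk) := by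
    linear_combination hS - gm * hN
  have e1 : |gj*nj| ≤ W * η := by
    rw [abs_mul]; exact mul_le_mul hgj hnj (abs_nonneg _) hW0
  have e2 : |gk*nk| ≤ W * η := by
    rw [abs_mul]; exact mul_le_mul hgk hnk (abs_nonneg _) hW0
  have e3 : |gm*(nj+nk)| ≤ W * (2*η) := by
    rw [abs_mul]
    exact mul_le_mul hgm (le_trans (abs_add_le _ _) (by linarith)) (abs_nonneg _) hW0
  have h1 : |nl * (gl - gm)| ≤ 4/3*κ + 4*η*W := by
    rw [key, abs_le]
    obtain ⟨a1, a2⟩ := abs_le.1 e1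
    obtain ⟨b1, b2⟩ := abs_le.1 e2
    obtain ⟨c1, c2⟩ := abs_le.1 e3
    obtain ⟨d1, d2⟩ := abs_le.1 hP
    constructor <;> nlinarith
  have h2 : |nl| * |gl - gm| ≤ 4/3*κ + 4*η*W := by rwa [← abs_mul]
  nlinarith [abs_nonneg (gl - gm), abs_nonneg nl]

lemma sum_four_distinct (g : Fin 4 → ℝ) (l m j k : Fin 4)
    (hlm : l ≠ m) (hlj : l ≠ j) (hlk : l ≠ k) (hmj : m ≠ j) (hmk : m ≠ k) (hjk : j ≠ k) :
    ∑ i : Fin 4, g i = g l + g m + g j + g k := by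
  have h1 : j ∉ ({k} : Finset (Fin 4)) := by simp [hjk]
  have h2 : m ∉ ({j, k} : Finset (Fin 4)) := by simp [hmj, hmk]
  have h3 : l ∉ ({m, j, k} : Finset (Fin 4)) := by simp [hlm, hlj, hlk]
  have hcard : ({l, m, j, k} : Finset (Fin 4)).card = 4 := by
    rw [Finset.card_insert_of_notMem h3, Finset.card_insert_of_notMem h2,
      Finset.card_insert_of_notMem h1, Finset.card_singleton]
  have huniv : (Finset.univ : Finset (Fin 4)) = {l, m, j, k} :=
    (Finset.eq_univ_of_card _ hcard).symm
  rw [huniv, Finset.sum_insert h3, Finset.sum_insert h2, Finset.sum_insert h1,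
    Finset.sum_singleton]
  ring

lemma exists_other_pair : ∀ l m : Fin 4, l ≠ m → ∃ j k : Fin 4,
    j ≠ k ∧ l ≠ j ∧ l ≠ k ∧ m ≠ j ∧ m ≠ k := by decide

set_option maxHeartbeats 2000000 in
lemma alg_center (u : Fin 4 → E3)
    (hsum : ∑ i : Fin 4, u i = 0)
    (hframe : ∀ v : E3, ∑ i : Fin 4, ⟪v, u i⟫ ^ 2 = (4/3) * ‖v‖^2)
    (hu : ∀ i, ‖u i‖ = 1)
    (w : E3) (η κ : ℝ) (hη0 : 0 ≤ η) (hη : η ≤ 1/100) (hκ : 0 ≤ κ)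
    (H : ∀ j k : Fin 4, j ≠ k →
      ∃ n : E3, ‖n‖ = 1 ∧ |⟪n, u j⟫| ≤ η ∧ |⟪n, u k⟫| ≤ η ∧ |⟪n, w⟫| ≤ κ) :
    ‖w‖ ≤ 4 * κ := by
  set γ : Fin 4 → ℝ := fun i => ⟪w, u i⟫ with hγ
  have hγb : ∀ i, |γ i| ≤ ‖w‖ := fun i => by
    have := abs_real_inner_le_norm w (u i)
    rwa [hu i, mul_one] at this
  set B : ℝ := 5/3*κ + 5*η*‖w‖ with hB
  have hB0 : 0 ≤ B := by positivity
  have hpair : ∀ l m : Fin 4, l ≠ m → |γ l - γ m| ≤ B := by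
    intro l m hlm
    obtain ⟨j, k, hjk, hlj, hlk, hmj, hmk⟩ := exists_other_pair l m hlm
    obtain ⟨n, hn, hnj, hnk, hnw⟩ := H j k hjk
    have hS : γ l * ⟪n, u l⟫ + γ m * ⟪n, u m⟫ + γ j * ⟪n, u j⟫ + γ k * ⟪n, u k⟫
        = (4/3) * ⟪w, n⟫ := by
      have := frame_polar u hframe w n
      rwa [sum_four_distinct (fun i => ⟪w, u i⟫ * ⟪n, u i⟫) l m j k hlm hlj hlk hmj hmk hjk]
        at this
    have hN : ⟪n, u l⟫ + ⟪n, u m⟫ + ⟪n, u j⟫ + ⟪n, u k⟫ = 0 := by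
      have h0 : ∑ i : Fin 4, ⟪n, u i⟫ = 0 := by
        rw [← inner_sum, hsum, inner_zero_right]
      rwa [sum_four_distinct (fun i => ⟪n, u i⟫) l m j k hlm hlj hlk hmj hmk hjk] at h0
    have hPw : |⟪w, n⟫| ≤ κ := by rwa [real_inner_comm] at hnw
    have hν4 : ⟪n, u l⟫^2 + ⟪n, u m⟫^2 + ⟪n, u j⟫^2 + ⟪n, u k⟫^2 = 4/3 := by
      have h0 := hframe n
      rw [hn] at h0
      rw [sum_four_distinct (fun i => ⟪n, u i⟫^2) l m j k hlm hlj hlk hmj hmk hjk] at h0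
      linarith
    have hsq : ∀ x : ℝ, |x| ≤ η → x^2 ≤ η^2 := fun x h => by
      nlinarith [sq_abs x, abs_nonneg x]
    have hbig : ∀ x y : ℝ, x^2 + y^2 + ⟪n, u j⟫^2 + ⟪n, u k⟫^2 = 4/3 → |x| ≤ |y| →
        4/5 ≤ |y| := by
      intro x y hxy hle
      have h1 : x^2 ≤ y^2 := by
        rw [← sq_abs x, ← sq_abs y]
        exact pow_le_pow_left₀ (abs_nonneg _) hle 2
      have h2 : (4/5:ℝ)^2 ≤ y^2 := by nlinarith [hsq _ hnj, hsq _ hnk, hη, hη0]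
      nlinarith [abs_nonneg y, sq_abs y]
    have hlarge : 4/5 ≤ |⟪n, u l⟫| ∨ 4/5 ≤ |⟪n, u m⟫| := by
      rcases le_total (|⟪n, u l⟫|) (|⟪n, u m⟫|) with h | h
      · exact Or.inr (hbig _ _ hν4 h)
      · exact Or.inl (hbig ⟪n, u m⟫ ⟪n, u l⟫ (by linarith) h)
    rcases hlarge with h | h
    · exact alg_pair (γ l) (γ m) (γ j) (γ k) ⟪n, u l⟫ ⟪n, u m⟫ ⟪n, u j⟫ ⟪n, u k⟫ ‖w‖ η κ
        ⟪w, n⟫ hS hN hPw (hγb l) (hγb m) (hγb j) (hγb k) hnj hnk h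
    · rw [abs_sub_comm]
      exact alg_pair (γ m) (γ l) (γ j) (γ k) ⟪n, u m⟫ ⟪n, u l⟫ ⟪n, u j⟫ ⟪n, u k⟫ ‖w‖ η κ
        ⟪w, n⟫ (by linarith) (by linarith) hPw (hγb m) (hγb l) (hγb j) (hγb k)
        hnj hnk h
  have hγsum : ∑ i : Fin 4, γ i = 0 := by
    rw [hγ]
    simp only
    rw [← inner_sum, hsum, inner_zero_right]
  have hind : ∀ a, |γ a| ≤ B := by
    intro a
    have h4 : (4:ℝ) * γ a = ∑ b : Fin 4, (γ a - γ b) := by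
      rw [Finset.sum_sub_distrib, hγsum, Finset.sum_const, Finset.card_univ]
      simp
    have habs : |∑ b : Fin 4, (γ a - γ b)| ≤ 4 * B := by
      calc |∑ b : Fin 4, (γ a - γ b)| ≤ ∑ b : Fin 4, |γ a - γ b| :=
            Finset.abs_sum_le_sum_abs _ _
        _ ≤ ∑ _b : Fin 4, B := Finset.sum_le_sum (fun b _ => by
            by_cases hab : a = b
            · simp [hab, hB0]
            · exact hpair a b hab)
        _ = 4 * B := by rw [Finset.sum_const, Finset.card_univ]; simp
    rw [← h4] at habs
    rw [abs_mul] at habs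
    have h44 : |(4:ℝ)| = 4 := by norm_num
    rw [h44] at habs
    linarith [abs_nonneg (γ a)]
  have hsumsq : (4/3) * ‖w‖^2 ≤ 4 * B^2 := by
    have hle : ∑ i : Fin 4, γ i ^2 ≤ ∑ _i : Fin 4, B^2 :=
      Finset.sum_le_sum (fun i _ => by nlinarith [hind i, abs_nonneg (γ i), sq_abs (γ i)])
    rw [Finset.sum_const, Finset.card_univ] at hle
    simp at hle
    calc (4/3) * ‖w‖^2 = ∑ i : Fin 4, γ i ^ 2 := (hframe w).symm
      _ ≤ 4 * B^2 := by rw [Fin.sum_univ_four] at hle ⊢; linarith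
  have hW0 := norm_nonneg w
  have ht : η * ‖w‖ ≤ ‖w‖ / 100 := by nlinarith
  nlinarith [sq_nonneg (‖w‖ - 4*κ), sq_nonneg (‖w‖ + 4*κ), mul_nonneg hκ hW0,
    mul_nonneg hη0 hW0, sq_nonneg (η*‖w‖)]

/-! ### grid points and the core lemma -/

noncomputable def gcoef (s : Fin 7) : ℝ := (((s:ℕ):ℝ) + 1)/7

lemma gcoef_pos (s : Fin 7) : 0 < gcoef s := by
  unfold gcoef; positivity

lemma gcoef_le_one (s : Fin 7) : gcoef s ≤ 1 := by
  unfold gcoef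
  have : ((s:ℕ):ℝ) ≤ 6 := by exact_mod_cast Nat.lt_succ_iff.1 s.isLt
  linarith

lemma gcoef_diff (s t : Fin 7) (h : s ≠ t) : 1/7 ≤ |gcoef s - gcoef t| := by
  unfold gcoef
  have h1 : (s:ℕ) ≠ (t:ℕ) := fun hh => h (Fin.ext hh)
  have h2 : ((s:ℕ):ℤ) ≠ ((t:ℕ):ℤ) := by exact_mod_cast h1
  have h3 : 1 ≤ |((s:ℕ):ℤ) - ((t:ℕ):ℤ)| := Int.one_le_abs (sub_ne_zero.2 h2)
  have h4 : (1:ℝ) ≤ |((s:ℕ):ℝ) - ((t:ℕ):ℝ)| := by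
    calc (1:ℝ) = ((1:ℤ):ℝ) := by norm_num
      _ ≤ |(((s:ℕ):ℤ) - ((t:ℕ):ℤ) : ℤ)| := by exact_mod_cast h3
      _ = |((s:ℕ):ℝ) - ((t:ℕ):ℝ)| := by push_cast; ring_nf
  have h5 : (((s:ℕ):ℝ) + 1)/7 - ((((t:ℕ):ℝ)) + 1)/7 = (((s:ℕ):ℝ) - ((t:ℕ):ℝ))/7 := by ring
  rw [h5, abs_div]
  rw [abs_of_pos (by norm_num : (0:ℝ) < 7)]
  linarith

noncomputable def gpt (f : E3 ≃ₗᵢ[ℝ] E3) (x : E3) (r : ℝ) (j k : Fin 4) (s t : Fin 7) : E3 :=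
  x + f ((r/3) • (gcoef s • tA j + gcoef t • tA k))

lemma inner_gpt (m : E3) (f : E3 ≃ₗᵢ[ℝ] E3) (x : E3) (r : ℝ) (j k : Fin 4) (s t : Fin 7) :
    ⟪m, gpt f x r j k s t⟫ = ⟪m, x⟫
      + (r/3) * (gcoef s * ⟪m, f (tA j)⟫ + gcoef t * ⟪m, f (tA k)⟫) := by
  unfold gpt
  rw [inner_add_right]
  rw [map_smul, inner_smul_right, map_add, map_smul, map_smul, inner_add_right,
    inner_smul_right, inner_smul_right]

set_option maxHeartbeats 1000000 in
lemma core (f : E3 ≃ₗᵢ[ℝ] E3) (x : E3) (r δ : ℝ) (hr : 0 < r) (hδ : 0 ≤ δ)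
    (ι : Type) [Fintype ι] (hcard : Fintype.card ι ≤ 6)
    (n : ι → E3) (b : ι → ℝ)
    (j k : Fin 4)
    (H : ∀ s t : Fin 7, ∃ i, |⟪n i, gpt f x r j k s t⟫ - b i| ≤ δ * r) :
    ∃ i, |⟪n i, f (tA j)⟫| ≤ 42*δ ∧ |⟪n i, f (tA k)⟫| ≤ 42*δ ∧ |⟪n i, x⟫ - b i| ≤ 29*(δ*r) := by
  classical
  have hι : Nonempty ι := by
    rcases H 0 0 with ⟨i, _⟩; exact ⟨i⟩
  choose g hg using H
  set g' : Fin 7 × Fin 7 → ι := fun p => g p.1 p.2 with hg'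
  have hpigeon : ∃ i ∈ (Finset.univ : Finset ι),
      8 < ((Finset.univ : Finset (Fin 7 × Fin 7)).filter (fun p => g' p = i)).card := by
    apply Finset.exists_lt_card_fiber_of_mul_lt_card_of_maps_to
    · intro a _; exact Finset.mem_univ _
    · rw [Finset.card_univ, Finset.card_univ, Fintype.card_prod, Fintype.card_fin]
      omega
  obtain ⟨i, _, hF⟩ := hpigeon
  set F := (Finset.univ : Finset (Fin 7 × Fin 7)).filter (fun p => g' p = i) with hFdef
  have hmem : ∀ p ∈ F, |⟪n i, gpt f x r j k p.1 p.2⟫ - b i| ≤ δ * r := by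
    intro p hp
    rw [hFdef, Finset.mem_filter] at hp
    have := hg p.1 p.2
    rwa [show g p.1 p.2 = i from hp.2] at this
  have hfst : ∃ p ∈ F, ∃ q ∈ F, p ≠ q ∧ p.1 = q.1 := by
    apply Finset.exists_ne_map_eq_of_card_lt_of_maps_to (t := (Finset.univ : Finset (Fin 7)))
    · rw [Finset.card_univ, Fintype.card_fin]; omega
    · intro a _; exact Finset.mem_univ _
  have hsnd : ∃ p ∈ F, ∃ q ∈ F, p ≠ q ∧ p.2 = q.2 := by
    apply Finset.exists_ne_map_eq_of_card_lt_of_maps_to (t := (Finset.univ : Finset (Fin 7)))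
    · rw [Finset.card_univ, Fintype.card_fin]; omega
    · intro a _; exact Finset.mem_univ _
  have hk : |⟪n i, f (tA k)⟫| ≤ 42*δ := by
    obtain ⟨p, hp, q, hq, hpq, h1⟩ := hfst
    have h2 : p.2 ≠ q.2 := fun h => hpq (Prod.ext h1 h)
    have e1 := hmem p hp
    have e2 := hmem q hq
    have hdiff : ⟪n i, gpt f x r j k p.1 p.2⟫ - ⟪n i, gpt f x r j k q.1 q.2⟫
        = (r/3) * ((gcoef p.2 - gcoef q.2) * ⟪n i, f (tA k)⟫) := by
      rw [inner_gpt, inner_gpt, h1]; ring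
    have e3 : |⟪n i, gpt f x r j k p.1 p.2⟫ - ⟪n i, gpt f x r j k q.1 q.2⟫| ≤ 2*(δ*r) := by
      rw [abs_le] at e1 e2 ⊢; constructor <;> linarith
    rw [hdiff] at e3
    have e4 := gcoef_diff p.2 q.2 h2
    rw [abs_mul, abs_mul] at e3
    rw [abs_of_pos (by linarith : (0:ℝ) < r/3)] at e3
    nlinarith [abs_nonneg (⟪n i, f (tA k)⟫), abs_nonneg (gcoef p.2 - gcoef q.2),
      mul_le_mul_of_nonneg_right e4 (abs_nonneg (⟪n i, f (tA k)⟫))]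
  have hj : |⟪n i, f (tA j)⟫| ≤ 42*δ := by
    obtain ⟨p, hp, q, hq, hpq, h1⟩ := hsnd
    have h2 : p.1 ≠ q.1 := fun h => hpq (Prod.ext h h1)
    have e1 := hmem p hp
    have e2 := hmem q hq
    have hdiff : ⟪n i, gpt f x r j k p.1 p.2⟫ - ⟪n i, gpt f x r j k q.1 q.2⟫
        = (r/3) * ((gcoef p.1 - gcoef q.1) * ⟪n i, f (tA j)⟫) := by
      rw [inner_gpt, inner_gpt, h1]; ring
    have e3 : |⟪n i, gpt f x r j k p.1 p.2⟫ - ⟪n i, gpt f x r j k q.1 q.2⟫| ≤ 2*(δ*r) := by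
      rw [abs_le] at e1 e2 ⊢; constructor <;> linarith
    rw [hdiff] at e3
    have e4 := gcoef_diff p.1 q.1 h2
    rw [abs_mul, abs_mul] at e3
    rw [abs_of_pos (by linarith : (0:ℝ) < r/3)] at e3
    nlinarith [abs_nonneg (⟪n i, f (tA j)⟫), abs_nonneg (gcoef p.1 - gcoef q.1),
      mul_le_mul_of_nonneg_right e4 (abs_nonneg (⟪n i, f (tA j)⟫))]
  refine ⟨i, hj, hk, ?_⟩
  have hFne : F.Nonempty := Finset.card_pos.1 (by omega)
  obtain ⟨p, hp⟩ := hFne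
  have e1 := hmem p hp
  rw [inner_gpt] at e1
  have c1 := gcoef_le_one p.1
  have c2 := gcoef_le_one p.2
  have c1' := gcoef_pos p.1
  have c2' := gcoef_pos p.2
  have b1 : |(r/3) * (gcoef p.1 * ⟪n i, f (tA j)⟫ + gcoef p.2 * ⟪n i, f (tA k)⟫)|
      ≤ (r/3) * (42*δ + 42*δ) := by
    rw [abs_mul, abs_of_pos (by linarith : (0:ℝ) < r/3)]
    apply mul_le_mul_of_nonneg_left _ (by linarith : (0:ℝ) ≤ r/3)
    calc |gcoef p.1 * ⟪n i, f (tA j)⟫ + gcoef p.2 * ⟪n i, f (tA k)⟫|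
        ≤ |gcoef p.1 * ⟪n i, f (tA j)⟫| + |gcoef p.2 * ⟪n i, f (tA k)⟫| := abs_add_le _ _
      _ ≤ 42*δ + 42*δ := by
          rw [abs_mul, abs_mul, abs_of_pos c1', abs_of_pos c2']
          have u1 : gcoef p.1 * |⟪n i, f (tA j)⟫| ≤ 1 * (42*δ) := by
            apply mul_le_mul c1 hj (abs_nonneg _) (by norm_num)
          have u2 : gcoef p.2 * |⟪n i, f (tA k)⟫| ≤ 1 * (42*δ) := by
            apply mul_le_mul c2 hk (abs_nonneg _) (by norm_num)
          linarith
  rw [abs_le] at e1 b1 ⊢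
  constructor <;> nlinarith [hr.le]


/-! ### pointwise closeness and interfaces -/

def PW (x : E3) (r : ℝ) (A B : Set E3) (c : ℝ) : Prop :=
  (∀ z ∈ A ∩ ball x r, Metric.infDist z B ≤ c) ∧
  (∀ z ∈ B ∩ ball x r, Metric.infDist z A ≤ c)

lemma pw_mono {x : E3} {r c c' : ℝ} {A B : Set E3} (h : PW x r A B c) (hcc : c ≤ c') :
    PW x r A B c' :=
  ⟨fun z hz => le_trans (h.1 z hz) hcc, fun z hz => le_trans (h.2 z hz) hcc⟩

lemma pw_shrink {x : E3} {r r' c : ℝ} {A B : Set E3} (h : PW x r A B c) (hr' : r' ≤ r) :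
    PW x r' A B c := by
  have hb : ball x r' ⊆ ball x r := ball_subset_ball hr'
  exact ⟨fun z hz => h.1 z ⟨hz.1, hb hz.2⟩, fun z hz => h.2 z ⟨hz.1, hb hz.2⟩⟩

lemma pw_of_relDist {x : E3} {r c : ℝ} {A B : Set E3} (hr : 0 < r) (hxA : x ∈ A) (hxB : x ∈ B)
    (h : relDist x r A B ≤ c) : PW x r A B (c * r) := by
  set M1 := sSup ((fun z => Metric.infDist z B) '' (A ∩ ball x r)) with hM1
  set M2 := sSup ((fun z => Metric.infDist z A) '' (B ∩ ball x r)) with hM2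
  have hM : max M1 M2 ≤ c * r := by
    unfold relDist at h
    rw [← hM1, ← hM2] at h
    have h2 := mul_le_mul_of_nonneg_left h hr.le
    rw [← mul_assoc, mul_inv_cancel₀ hr.ne', one_mul] at h2
    linarith [h2]
  constructor
  · intro z hz
    have hb : BddAbove ((fun z => Metric.infDist z B) '' (A ∩ ball x r)) := by
      refine ⟨r, ?_⟩
      rintro t ⟨y, hy, rfl⟩
      exact le_trans (Metric.infDist_le_dist_of_mem hxB) (mem_ball.1 hy.2).le
    have := le_csSup hb ⟨z, hz, rfl⟩
    calc Metric.infDist z B ≤ M1 := this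
      _ ≤ max M1 M2 := le_max_left _ _
      _ ≤ c * r := hM
  · intro z hz
    have hb : BddAbove ((fun z => Metric.infDist z A) '' (B ∩ ball x r)) := by
      refine ⟨r, ?_⟩
      rintro t ⟨y, hy, rfl⟩
      exact le_trans (Metric.infDist_le_dist_of_mem hxA) (mem_ball.1 hy.2).le
    have := le_csSup hb ⟨z, hz, rfl⟩
    calc Metric.infDist z A ≤ M2 := this
      _ ≤ max M1 M2 := le_max_right _ _
      _ ≤ c * r := hM

lemma relDist_nonneg {x : E3} {r : ℝ} {A B : Set E3} (hr : 0 < r) : 0 ≤ relDist x r A B := by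
  unfold relDist
  apply mul_nonneg (inv_nonneg.2 hr.le)
  refine le_trans ?_ (le_max_left _ _)
  apply Real.sSup_nonneg
  rintro t ⟨y, _, rfl⟩
  exact Metric.infDist_nonneg

/-! ### basic facts about sets of type 3 -/

lemma zero_mem_TBase : (0:E3) ∈ TBase := by
  refine ⟨0, le_refl 0, 0, 1, by decide, tA 0, left_mem_segment ℝ _ _, by simp⟩

lemma type3center_mem {T : Set E3} {x : E3} (h : Type3Center T x) : x ∈ T := by
  obtain ⟨R, _, hT, hc⟩ := h
  rw [hT, hc]
  exact ⟨0, zero_mem_TBase, rfl⟩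

lemma exists_type3center (x : E3) : ∃ T, Type3Center T x := by
  refine ⟨(fun w => w + x) '' TBase, fun w => w + x, ⟨LinearIsometryEquiv.refl ℝ E3, x, ?_, fun w => rfl⟩, rfl, by simp⟩
  have h1 : (LinearIsometryEquiv.refl ℝ E3).toLinearEquiv.toLinearMap = LinearMap.id := rfl
  rw [h1, LinearMap.det_id]

lemma type3_translate {Z : Set E3} {a : E3} (h : Type3Center Z a) (w : E3) :
    Type3Center ((fun z => z + w) '' Z) (a + w) := by
  obtain ⟨R, ⟨f, v, hdet, hR⟩, hZ, hc⟩ := h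
  refine ⟨fun y => R y + w, ⟨f, v + w, hdet, fun y => by show R y + w = _; rw [hR y, add_assoc]⟩, ?_, by rw [hc]⟩
  rw [hZ, Set.image_image]

lemma infDist_translate_le (z w : E3) (S : Set E3) (hS : S.Nonempty) :
    Metric.infDist z ((fun y => y + w) '' S) ≤ Metric.infDist z S + ‖w‖ := by
  apply le_of_forall_pos_le_add
  intro θ hθ
  have h1 : Metric.infDist z S < Metric.infDist z S + θ := by linarith
  obtain ⟨s, hs, hds⟩ := (Metric.infDist_lt_iff hS).1 h1
  have h2 : Metric.infDist z ((fun y => y + w) '' S) ≤ dist z (s + w) :=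
    Metric.infDist_le_dist_of_mem ⟨s, hs, rfl⟩
  have h3 : dist z (s + w) ≤ dist z s + ‖w‖ := by
    calc dist z (s + w) ≤ dist z s + dist s (s + w) := dist_triangle _ _ _
      _ = dist z s + ‖w‖ := by rw [dist_eq_norm]; simp
  linarith

/-! ### grid points lie on T and in the ball -/

lemma gpt_arg_mem_TBase {r : ℝ} (hr : 0 < r) {j k : Fin 4} (hjk : j ≠ k) (s t : Fin 7) :
    (r/3) • (gcoef s • tA j + gcoef t • tA k) ∈ TBase := by
  have hs := gcoef_pos s
  have ht := gcoef_pos t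
  have hst : 0 < gcoef s + gcoef t := by linarith
  refine ⟨(r/3) * (gcoef s + gcoef t), by positivity, j, k, hjk,
    (gcoef s/(gcoef s + gcoef t)) • tA j + (gcoef t/(gcoef s + gcoef t)) • tA k,
    ⟨gcoef s/(gcoef s + gcoef t), gcoef t/(gcoef s + gcoef t), by positivity, by positivity,
      by field_simp, rfl⟩, ?_⟩
  rw [smul_add, smul_add, smul_smul, smul_smul, smul_smul, smul_smul]
  congr 1
  · congr 1
    field_simp
  · congr 1
    field_simp

lemma gpt_mem_T (f : E3 ≃ₗᵢ[ℝ] E3) (x : E3) {r : ℝ} (hr : 0 < r) {j k : Fin 4} (hjk : j ≠ k)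
    (s t : Fin 7) : gpt f x r j k s t ∈ (fun w => f w + x) '' TBase := by
  exact ⟨(r/3) • (gcoef s • tA j + gcoef t • tA k), gpt_arg_mem_TBase hr hjk s t,
    by rw [gpt]; exact add_comm _ _⟩

lemma gpt_mem_ball (f : E3 ≃ₗᵢ[ℝ] E3) (x : E3) {r : ℝ} (hr : 0 < r) (j k : Fin 4)
    (s t : Fin 7) : gpt f x r j k s t ∈ ball x r := by
  rw [mem_ball, dist_eq_norm, gpt]
  have h1 : x + f ((r/3) • (gcoef s • tA j + gcoef t • tA k)) - x
      = f ((r/3) • (gcoef s • tA j + gcoef t • tA k)) := by abel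
  rw [h1, f.norm_map]
  have h2 : ‖(r/3) • (gcoef s • tA j + gcoef t • tA k)‖
      ≤ (r/3) * (gcoef s * 1 + gcoef t * 1) := by
    rw [norm_smul, Real.norm_eq_abs, abs_of_pos (by linarith : (0:ℝ) < r/3)]
    apply mul_le_mul_of_nonneg_left _ (by linarith : (0:ℝ) ≤ r/3)
    calc ‖gcoef s • tA j + gcoef t • tA k‖ ≤ ‖gcoef s • tA j‖ + ‖gcoef t • tA k‖ :=
          norm_add_le _ _
      _ = gcoef s * 1 + gcoef t * 1 := by
          rw [norm_smul, norm_smul, norm_tA, norm_tA, Real.norm_eq_abs, Real.norm_eq_abs,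
            abs_of_pos (gcoef_pos s), abs_of_pos (gcoef_pos t)]
  have h3 := gcoef_le_one s
  have h4 := gcoef_le_one t
  have h5 := gcoef_pos s
  have h6 := gcoef_pos t
  nlinarith


/-! ### extracting covers from minimal cones -/

lemma fc_ne : ∀ l : Fin 6, (fc l).1 ≠ (fc l).2 := by decide

lemma face_union : ∀ l l' : Fin 6, l ≠ l' → ∃ a b c : Fin 4,
    a ≠ b ∧ a ≠ c ∧ b ≠ c ∧
    (a = (fc l).1 ∨ a = (fc l).2 ∨ a = (fc l').1 ∨ a = (fc l').2) ∧
    (b = (fc l).1 ∨ b = (fc l).2 ∨ b = (fc l').1 ∨ b = (fc l').2) ∧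
    (c = (fc l).1 ∨ c = (fc l).2 ∨ c = (fc l').1 ∨ c = (fc l').2) := by decide

lemma cover_type1 {P : AffineSubspace ℝ E3} (hfin : Module.finrank ℝ P.direction = 2)
    {x₀ : E3} (hx₀ : x₀ ∈ (P : Set E3)) :
    ∃ n : E3, ‖n‖ = 1 ∧ ∃ b : ℝ, ∀ z ∈ (P : Set E3), ⟪n, z⟫ = b := by
  have hdim : Module.finrank ℝ (P.direction)ᗮ = 1 := by
    have h1 := Submodule.finrank_add_finrank_orthogonal (P.direction)
    have h2 : Module.finrank ℝ E3 = 3 := by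
      simp [finrank_euclideanSpace_fin]
    omega
  have hne : (P.direction)ᗮ ≠ ⊥ := by
    intro hbot
    rw [hbot] at hdim
    simp at hdim
  obtain ⟨v, hv, hv0⟩ := Submodule.exists_mem_ne_zero_of_ne_bot hne
  refine ⟨‖v‖⁻¹ • v, norm_smul_inv_norm hv0, ⟪‖v‖⁻¹ • v, x₀⟫, ?_⟩
  intro z hz
  have hd : z -ᵥ x₀ ∈ P.direction := AffineSubspace.vsub_mem_direction hz hx₀
  have hperp : ⟪v, z - x₀⟫ = 0 := by
    have := (Submodule.mem_orthogonal (P.direction) v).1 hv (z -ᵥ x₀) hd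
    rwa [real_inner_comm] at this
  have : ⟪‖v‖⁻¹ • v, z - x₀⟫ = 0 := by
    rw [inner_smul_left]
    simp [hperp]
  rw [inner_sub_right] at this
  linarith

/-! ### the rigidity lemmas -/

lemma frame_rot (f : E3 ≃ₗᵢ[ℝ] E3) (v : E3) :
    ∑ i : Fin 4, ⟪v, f (tA i)⟫ ^ 2 = (4/3) * ‖v‖^2 := by
  have h1 : ∀ i : Fin 4, ⟪v, f (tA i)⟫ = ⟪f.symm v, tA i⟫ := by
    intro i
    rw [← f.inner_map_map (f.symm v) (tA i), f.apply_symm_apply]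
  simp only [h1]
  rw [frame_tA (f.symm v), f.symm.norm_map]

lemma norm_rot (f : E3 ≃ₗᵢ[ℝ] E3) (i : Fin 4) : ‖f (tA i)‖ = 1 := by
  rw [f.norm_map, norm_tA]

lemma sum_rot (f : E3 ≃ₗᵢ[ℝ] E3) : ∑ i : Fin 4, f (tA i) = 0 := by
  rw [← map_sum, sum_tA, map_zero]

set_option maxHeartbeats 1000000 in
lemma core_cones (f : E3 ≃ₗᵢ[ℝ] E3) (x : E3) (r δ : ℝ) (hr : 0 < r) (hδ0 : 0 < δ)
    (Z : Set E3) (hZne : Z.Nonempty)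
    (hgrid : ∀ j k : Fin 4, j ≠ k → ∀ s t : Fin 7,
      Metric.infDist (gpt f x r j k s t) Z ≤ δ * r)
    (ι : Type) [Fintype ι] (hcard : Fintype.card ι ≤ 6)
    (n : ι → E3) (b : ι → ℝ) (hn : ∀ i, ‖n i‖ = 1)
    (hcover : ∀ z ∈ Z, ∃ i, ⟪n i, z⟫ = b i) :
    ∀ j k : Fin 4, j ≠ k →
      ∃ i, |⟪n i, f (tA j)⟫| ≤ 84*δ ∧ |⟪n i, f (tA k)⟫| ≤ 84*δ ∧
        |⟪n i, x⟫ - b i| ≤ 58*(δ*r) := by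
  intro j k hjk
  have H : ∀ s t : Fin 7, ∃ i, |⟪n i, gpt f x r j k s t⟫ - b i| ≤ (2*δ) * r := by
    intro s t
    have h1 : Metric.infDist (gpt f x r j k s t) Z < 2*δ*r := by
      have := hgrid j k hjk s t
      nlinarith
    obtain ⟨z', hz', hdz⟩ := (Metric.infDist_lt_iff hZne).1 h1
    obtain ⟨i, hi⟩ := hcover z' hz'
    refine ⟨i, ?_⟩
    have h2 : ⟪n i, gpt f x r j k s t⟫ - b i = ⟪n i, gpt f x r j k s t - z'⟫ := by
      rw [inner_sub_right, hi]
    rw [h2]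
    calc |⟪n i, gpt f x r j k s t - z'⟫| ≤ ‖n i‖ * ‖gpt f x r j k s t - z'‖ :=
          abs_real_inner_le_norm _ _
      _ = dist (gpt f x r j k s t) z' := by rw [hn i, one_mul, dist_eq_norm]
      _ ≤ 2*δ*r := hdz.le
  obtain ⟨i, h1, h2, h3⟩ := core f x r (2*δ) hr (by linarith) ι hcard n b j k H
  exact ⟨i, by linarith, by linarith, by linarith⟩

/-- If the grid of a `T` centered at `x` is `δr`-close to a set of type 3 with
center `a`, then `a` is close to `x`. -/
lemma rigid_center (f : E3 ≃ₗᵢ[ℝ] E3) (x : E3) (r δ : ℝ) (hr : 0 < r) (hδ0 : 0 < δ)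
    (hδ : δ ≤ 1/10000)
    (Z : Set E3) (a : E3) (hZa : Type3Center Z a)
    (hgrid : ∀ j k : Fin 4, j ≠ k → ∀ s t : Fin 7,
      Metric.infDist (gpt f x r j k s t) Z ≤ δ * r) :
    ‖x - a‖ ≤ 232 * (δ * r) := by
  have hZne : Z.Nonempty := ⟨a, type3center_mem hZa⟩
  obtain ⟨R, ⟨f3, v3, hdet3, hR3⟩, hZeq, hceq⟩ := hZa
  have hav : a = v3 := by rw [hceq, hR3 0, map_zero, zero_add]
  set n : Fin 6 → E3 := fun l => f3 (nrm l) with hn_def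
  set b : Fin 6 → ℝ := fun l => ⟪f3 (nrm l), v3⟫ with hb_def
  have hn : ∀ l, ‖n l‖ = 1 := fun l => by rw [hn_def]; simp [f3.norm_map, nrm_unit]
  have hcover : ∀ z ∈ Z, ∃ l, ⟪n l, z⟫ = b l := by
    intro z hz
    rw [hZeq] at hz
    obtain ⟨w, hw, rfl⟩ := hz
    obtain ⟨l, hl⟩ := TBase_cover w hw
    refine ⟨l, ?_⟩
    rw [hR3 w, hn_def, hb_def]
    simp only
    rw [inner_add_right, f3.inner_map_map, hl, zero_add]
  have happ := core_cones f x r δ hr hδ0 Z hZne hgrid (Fin 6) (by norm_num) n b hn hcover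
  have halg := alg_center (fun i => f (tA i)) (sum_rot f) (frame_rot f) (norm_rot f) (x - v3)
    (84*δ) (58*(δ*r)) (by linarith) (by linarith) (by nlinarith) ?_
  · rw [hav]; linarith [halg]
  · intro j k hjk
    obtain ⟨i, u1, u2, u3⟩ := happ j k hjk
    refine ⟨n i, hn i, u1, u2, ?_⟩
    have h5 : ⟪n i, x - v3⟫ = ⟪n i, x⟫ - b i := by
      rw [inner_sub_right, hb_def]
    rwa [h5]

set_option maxHeartbeats 1000000 in
/-- A minimal cone whose grid of a centered `T` is close to it must be of type 3. -/
lemma rigid_type (f : E3 ≃ₗᵢ[ℝ] E3) (x : E3) (r δ : ℝ) (hr : 0 < r) (hδ0 : 0 < δ)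
    (hδ : δ ≤ 1/10000)
    (Z : Set E3) (hZ : MinimalCone Z) (hZne : Z.Nonempty)
    (hgrid : ∀ j k : Fin 4, j ≠ k → ∀ s t : Fin 7,
      Metric.infDist (gpt f x r j k s t) Z ≤ δ * r) :
    ∃ a, Type3Center Z a := by
  rcases hZ with hZ1 | hZ2 | hZ3
  · exfalso
    obtain ⟨P, hfin, hZeq⟩ := hZ1
    obtain ⟨z₀, hz₀⟩ := id hZne
    rw [hZeq] at hz₀
    obtain ⟨n, hn, b, hb⟩ := cover_type1 hfin hz₀
    have happ := core_cones f x r δ hr hδ0 Z hZne hgrid (Fin 1) (by norm_num)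
      (fun _ => n) (fun _ => b) (fun _ => hn) (fun z hz => ⟨0, hb z (by rwa [← hZeq])⟩)
    obtain ⟨_, ha0, ha1, _⟩ := happ 0 1 (by decide)
    obtain ⟨_, ha2, _, _⟩ := happ 2 3 (by decide)
    have := alg2 (fun i => f (tA i)) (frame_rot f) (norm_rot f) n hn (84*δ) 0 1 2
      (by decide) (by decide) (by decide) ha0 ha1 ha2
    linarith
  · exfalso
    obtain ⟨R, ⟨f2, v2, hdet2, hR2⟩, hZeq⟩ := hZ2
    set n : Fin 3 → E3 := fun l => f2 (mY l) with hn_def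
    set b : Fin 3 → ℝ := fun l => ⟪f2 (mY l), v2⟫ with hb_def
    have hn : ∀ l, ‖n l‖ = 1 := fun l => by rw [hn_def]; simp [f2.norm_map, mY_unit]
    have hcover : ∀ z ∈ Z, ∃ l, ⟪n l, z⟫ = b l := by
      intro z hz
      rw [hZeq] at hz
      obtain ⟨w, hw, rfl⟩ := hz
      obtain ⟨l, hl⟩ := YBase_cover w hw
      refine ⟨l, ?_⟩
      rw [hR2 w, hn_def, hb_def]
      simp only
      rw [inner_add_right, f2.inner_map_map, hl, zero_add]
    have happ := core_cones f x r δ hr hδ0 Z hZne hgrid (Fin 3) (by norm_num) n b hn hcover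
    have hface : ∀ l : Fin 6, ∃ i : Fin 3, |⟪n i, f (tA (fc l).1)⟫| ≤ 84*δ ∧
        |⟪n i, f (tA (fc l).2)⟫| ≤ 84*δ := by
      intro l
      obtain ⟨i, u1, u2, _⟩ := happ (fc l).1 (fc l).2 (fc_ne l)
      exact ⟨i, u1, u2⟩
    choose mIdx hmIdx using hface
    have hpig : ∃ l ∈ (Finset.univ : Finset (Fin 6)), ∃ l' ∈ (Finset.univ : Finset (Fin 6)),
        l ≠ l' ∧ mIdx l = mIdx l' := by
      apply Finset.exists_ne_map_eq_of_card_lt_of_maps_to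
        (t := (Finset.univ : Finset (Fin 3)))
      · rw [Finset.card_univ, Finset.card_univ, Fintype.card_fin, Fintype.card_fin]; omega
      · intro a _; exact Finset.mem_univ _
    obtain ⟨l, _, l', _, hll', heq⟩ := hpig
    obtain ⟨a, bb, c, hab, hac, hbc, hha, hhb, hhc⟩ := face_union l l' hll'
    have hbnd : ∀ d : Fin 4,
        (d = (fc l).1 ∨ d = (fc l).2 ∨ d = (fc l').1 ∨ d = (fc l').2) →
        |⟪n (mIdx l), f (tA d)⟫| ≤ 84*δ := by
      intro d hd
      rcases hd with rfl | rfl | rfl | rfl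
      · exact (hmIdx l).1
      · exact (hmIdx l).2
      · rw [heq]; exact (hmIdx l').1
      · rw [heq]; exact (hmIdx l').2
    have := alg2 (fun i => f (tA i)) (frame_rot f) (norm_rot f) (n (mIdx l)) (hn (mIdx l))
      (84*δ) a bb c hab hac hbc (hbnd a hha) (hbnd bb hhb) (hbnd c hhc)
    linarith
  · obtain ⟨R, ⟨f3, v3, hdet3, hR3⟩, hZeq⟩ := hZ3
    exact ⟨v3, R, ⟨f3, v3, hdet3, hR3⟩, hZeq, by rw [hR3 0, map_zero, zero_add]⟩


/-! ### interfaces to `Standing` and `cNum` -/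

lemma standing_pw {E : Set E3} {ε : ℝ} (hE : Standing E ε) {x : E3} (hx : x ∈ E)
    (hx2 : x ∈ ball (0:E3) 2) {r : ℝ} (hr : 0 < r) (hball : ball x r ⊆ ball (0:E3) 2) :
    ∃ Z, MinimalCone Z ∧ x ∈ Z ∧ PW x r E Z (ε * r) := by
  obtain ⟨Z, h1, h2, h3⟩ := hE.2.2.2.2 x ⟨hx, hx2⟩ r hr hball
  exact ⟨Z, h1, h2, pw_of_relDist hr hx h2 h3⟩

lemma cnum_pw {E : Set E3} {x : E3} {r ε : ℝ} (hr : 0 < r) (hx : x ∈ E) (hε : 0 < ε)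
    (h : cNum E x r ≤ 150 * ε) :
    ∃ T, Type3Center T x ∧ PW x r E T ((151 * ε) * r) := by
  obtain ⟨T₀, hT₀⟩ := exists_type3center x
  have hne : {t | ∃ T, Type3Center T x ∧ t = relDist x r E T}.Nonempty :=
    ⟨relDist x r E T₀, T₀, hT₀, rfl⟩
  have hlt : sInf {t | ∃ T, Type3Center T x ∧ t = relDist x r E T} < 151 * ε := by
    have : cNum E x r < 151 * ε := lt_of_le_of_lt h (by linarith)
    rwa [cNum] at this
  obtain ⟨t, ⟨T, hT, rfl⟩, hlt'⟩ := exists_lt_of_csInf_lt hne hlt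
  exact ⟨T, hT, pw_of_relDist hr hx (type3center_mem hT) hlt'.le⟩

/-! ### propagation of the `T`-structure to larger scales -/

noncomputable def bigL : ℝ := 10^10

lemma bigL_pos : (0:ℝ) < bigL := by unfold bigL; positivity
lemma bigL_ge : (1000:ℝ) ≤ bigL := by unfold bigL; norm_num

set_option maxHeartbeats 2000000 in
lemma step_up {E : Set E3} {ε : ℝ} (hE : Standing E ε) {x : E3} (hxE : x ∈ E)
    (hx99 : ‖x‖ < 199/100) {r : ℝ} (hr : 0 < r) (h2r : 2*bigL*r ≤ 1/100)
    (h : ∃ T, Type3Center T x ∧ PW x r E T (bigL*ε*r)) :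
    ∃ T, Type3Center T x ∧ PW x (bigL*r) E T (bigL*ε*(bigL*r)) := by
  have hε : 0 < ε := hE.2.2.1
  have hε25 : ε ≤ 1/10^25 := by
    have h1 := hE.2.2.2.1
    have h10 : ((10:ℝ))^(-25:ℤ) = 1/10^25 := by norm_num
    rw [h10] at h1
    linarith
  have hΛpos : (0:ℝ) < bigL := bigL_pos
  have hΛ1 : (1000:ℝ) ≤ bigL := bigL_ge
  have hΛε : bigL*ε ≤ 1/10^15 := by
    have h1 : bigL*ε ≤ bigL*(1/10^25) := mul_le_mul_of_nonneg_left hε25 hΛpos.le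
    have h2 : bigL*(1/10^25) = 1/10^15 := by unfold bigL; norm_num
    linarith
  obtain ⟨T, hTc, hpw⟩ := h
  obtain ⟨R, ⟨f, v, hdet, hR⟩, hTeq, hceq⟩ := hTc
  have hvx : v = x := by rw [hceq, hR 0, map_zero, zero_add]
  have hTeq' : T = (fun w => f w + x) '' TBase := by
    rw [hTeq]
    rw [show R = fun w => f w + x from funext (fun w => by rw [hR w, hvx])]
  have hball2 : ball x (2*bigL*r) ⊆ ball (0:E3) 2 := by
    intro z hz
    rw [mem_ball, dist_zero_right]
    have h1 : dist z x < 2*bigL*r := mem_ball.1 hz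
    rw [dist_eq_norm] at h1
    have h2 : ‖z‖ ≤ ‖z - x‖ + ‖x‖ := by
      calc ‖z‖ = ‖(z - x) + x‖ := by rw [sub_add_cancel]
        _ ≤ ‖z - x‖ + ‖x‖ := norm_add_le _ _
    linarith
  have hx2 : x ∈ ball (0:E3) 2 := by
    rw [mem_ball, dist_zero_right]; linarith
  have h2Λr : 0 < 2*bigL*r := by positivity
  obtain ⟨Z, hZmin, hxZ, hZpw⟩ := standing_pw hE hxE hx2 h2Λr hball2
  have hZne : Z.Nonempty := ⟨x, hxZ⟩
  have hEne : E.Nonempty := ⟨0, hE.2.1⟩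
  have hδ0 : 0 < 4*bigL*ε := by positivity
  have hδsmall : 4*bigL*ε ≤ 1/10000 := by nlinarith [hΛε]
  have hgrid : ∀ j k : Fin 4, j ≠ k → ∀ s t : Fin 7,
      Metric.infDist (gpt f x r j k s t) Z ≤ (4*bigL*ε) * r := by
    intro j k hjk s t
    have hmemT : gpt f x r j k s t ∈ T := by
      rw [hTeq']; exact gpt_mem_T f x hr hjk s t
    have hmemB : gpt f x r j k s t ∈ ball x r := gpt_mem_ball f x hr j k s t
    have h1 : Metric.infDist (gpt f x r j k s t) E ≤ bigL*ε*r := hpw.2 _ ⟨hmemT, hmemB⟩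
    have h2 : Metric.infDist (gpt f x r j k s t) E < bigL*ε*r + ε*r := by nlinarith
    obtain ⟨e, heE, hde⟩ := (Metric.infDist_lt_iff hEne).1 h2
    have heB : e ∈ ball x (2*bigL*r) := by
      rw [mem_ball]
      have t1 : dist e x ≤ dist e (gpt f x r j k s t) + dist (gpt f x r j k s t) x :=
        dist_triangle _ _ _
      have t2 : dist (gpt f x r j k s t) x < r := mem_ball.1 hmemB
      have t3 : dist e (gpt f x r j k s t) < bigL*ε*r + ε*r := by
        rw [dist_comm]; exact hde
      have t4 : bigL*ε*r + ε*r + r < 2*bigL*r := by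
        have k0 : (2*bigL - (bigL*ε + ε + 1)) * r > 0 := by
          apply mul_pos _ hr
          nlinarith [hΛε, hε25]
        nlinarith [k0]
      linarith
    have h3 : Metric.infDist e Z ≤ ε*(2*bigL*r) := hZpw.1 e ⟨heE, heB⟩
    calc Metric.infDist (gpt f x r j k s t) Z
        ≤ Metric.infDist e Z + dist (gpt f x r j k s t) e :=
          Metric.infDist_le_infDist_add_dist
      _ ≤ ε*(2*bigL*r) + (bigL*ε*r + ε*r) := by linarith [hde]
      _ ≤ (4*bigL*ε)*r := by
          have k1 : (4*bigL*ε - (ε*(2*bigL) + bigL*ε + ε)) * r ≥ 0 :=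
            mul_nonneg (by nlinarith [hΛ1, hε]) hr.le
          nlinarith [k1]
  obtain ⟨a, hZa⟩ := rigid_type f x r (4*bigL*ε) hr hδ0 hδsmall Z hZmin hZne hgrid
  have hax : ‖x - a‖ ≤ 232*((4*bigL*ε)*r) :=
    rigid_center f x r (4*bigL*ε) hr hδ0 hδsmall Z a hZa hgrid
  refine ⟨(fun z => z + (x - a)) '' Z, ?_, ?_, ?_⟩
  · have h5 := type3_translate hZa (x - a)
    rwa [show a + (x - a) = x by abel] at h5
  · intro z hz
    have hzB : z ∈ ball x (2*bigL*r) := ball_subset_ball (by nlinarith) hz.2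
    have h1 : Metric.infDist z Z ≤ ε*(2*bigL*r) := hZpw.1 z ⟨hz.1, hzB⟩
    have h2 := infDist_translate_le z (x - a) Z hZne
    have h6 : ε*(2*bigL*r) + 232*((4*bigL*ε)*r) ≤ bigL*ε*(bigL*r) := by
      have key : bigL*ε*(bigL*r) - (ε*(2*bigL*r) + 232*((4*bigL*ε)*r))
          = (bigL*(ε*r))*(bigL - 930) := by ring
      have h7 : 0 ≤ (bigL*(ε*r))*(bigL - 930) :=
        mul_nonneg (mul_nonneg hΛpos.le (mul_nonneg hε.le hr.le)) (by linarith)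
      linarith
    linarith
  · intro z hz
    obtain ⟨⟨z₀, hz₀Z, rfl⟩, hzB⟩ := hz
    have hz₀B : z₀ ∈ ball x (2*bigL*r) := by
      rw [mem_ball]
      have t1 : dist z₀ x ≤ dist z₀ (z₀ + (x-a)) + dist (z₀ + (x-a)) x := dist_triangle _ _ _
      have t2 : dist z₀ (z₀ + (x-a)) = ‖x - a‖ := by
        rw [dist_eq_norm]
        have h9 : z₀ - (z₀ + (x-a)) = -(x-a) := by abel
        rw [h9, norm_neg]
      have t3 : dist (z₀ + (x-a)) x < bigL*r := mem_ball.1 hzB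
      have t4 : 232*((4*bigL*ε)*r) + bigL*r ≤ 2*bigL*r - r := by
        have key : (2*bigL*r - r) - (232*((4*bigL*ε)*r) + bigL*r)
            = r*(bigL - 1 - 928*(bigL*ε)) := by ring
        have h7 : 0 ≤ r*(bigL - 1 - 928*(bigL*ε)) :=
          mul_nonneg hr.le (by nlinarith [hΛε, hΛ1])
        linarith
      linarith
    have h1 : Metric.infDist z₀ E ≤ ε*(2*bigL*r) := hZpw.2 z₀ ⟨hz₀Z, hz₀B⟩
    have h2 : Metric.infDist (z₀ + (x-a)) E ≤ Metric.infDist z₀ E + dist (z₀ + (x-a)) z₀ :=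
      Metric.infDist_le_infDist_add_dist
    have t2 : dist (z₀ + (x-a)) z₀ = ‖x - a‖ := by
      rw [dist_eq_norm]
      have h9 : (z₀ + (x-a)) - z₀ = x - a := by abel
      rw [h9]
    have h6 : ε*(2*bigL*r) + 232*((4*bigL*ε)*r) ≤ bigL*ε*(bigL*r) := by
      have key : bigL*ε*(bigL*r) - (ε*(2*bigL*r) + 232*((4*bigL*ε)*r))
          = (bigL*(ε*r))*(bigL - 930) := by ring
      have h7 : 0 ≤ (bigL*(ε*r))*(bigL - 930) :=
        mul_nonneg (mul_nonneg hΛpos.le (mul_nonneg hε.le hr.le)) (by linarith)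
      linarith
    rw [t2] at h2
    linarith


set_option maxHeartbeats 1000000 in
lemma prop_up {E : Set E3} {ε : ℝ} (hE : Standing E ε) {x : E3} (hx3 : x ∈ Eset3 E ε)
    (hx99 : ‖x‖ < 199/100) {s : ℝ} (hs : 0 < s) (hs' : s ≤ 1/250) :
    ∃ T, Type3Center T x ∧ PW x s E T (bigL*ε*s) := by
  have hε : 0 < ε := hE.2.2.1
  obtain ⟨⟨hxE, hx2⟩, r₀, hr₀, hcn⟩ := hx3
  have hΛgt1 : (1:ℝ) < bigL := by linarith [bigL_ge]
  obtain ⟨k, hk⟩ : ∃ k : ℕ, s / r₀ < bigL ^ k := pow_unbounded_of_one_lt _ hΛgt1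
  have hbase : s / bigL ^ k < r₀ := by
    have hp : (0:ℝ) < bigL ^ k := pow_pos bigL_pos k
    rw [div_lt_iff₀ hr₀] at hk
    rw [div_lt_iff₀ hp]
    nlinarith
  have key : ∀ i : ℕ, i ≤ k → ∃ T, Type3Center T x ∧
      PW x (s / bigL^(k-i)) E T (bigL*ε*(s / bigL^(k-i))) := by
    intro i
    induction i with
    | zero =>
      intro _
      simp only [Nat.sub_zero]
      have hpos : 0 < s / bigL^k := by positivity
      have h150 := hcn _ hpos hbase
      obtain ⟨T, hT, hpw⟩ := cnum_pw hpos hxE hε h150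
      refine ⟨T, hT, pw_mono hpw ?_⟩
      have h1 : (151*ε) ≤ bigL*ε := by nlinarith [bigL_ge]
      exact mul_le_mul_of_nonneg_right h1 hpos.le
    | succ i ih =>
      intro hik
      obtain ⟨T, hT, hpw⟩ := ih (Nat.le_of_succ_le hik)
      have hrpos : 0 < s / bigL^(k-i) := by positivity
      have hscale : bigL * (s / bigL^(k-i)) = s / bigL^(k-(i+1)) := by
        have hki : k - i = (k - (i+1)) + 1 := by omega
        rw [hki, pow_succ]
        have hp : (0:ℝ) < bigL ^ (k-(i+1)) := pow_pos bigL_pos _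
        field_simp
      have h2r : 2*bigL*(s/bigL^(k-i)) ≤ 1/100 := by
        have h1 : bigL ≤ bigL^(k-i) := by
          calc bigL = bigL^1 := (pow_one _).symm
            _ ≤ bigL^(k-i) := pow_le_pow_right₀ (le_of_lt hΛgt1) (by omega)
        have h2 : s / bigL^(k-i) ≤ s / bigL :=
          div_le_div_of_nonneg_left hs.le bigL_pos h1
        have h3 : bigL * (s / bigL) = s := by
          field_simp
        nlinarith [bigL_pos]
      have hstep := step_up hE hxE hx99 hrpos h2r ⟨T, hT, hpw⟩
      rwa [hscale] at hstep
  have hfin := key k le_rfl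
  simpa [Nat.sub_self, pow_zero] using hfin

set_option maxHeartbeats 1000000 in
lemma match_grid {E : Set E3} (hEne : E.Nonempty) {p : E3} {ρ c1 c2 δ : ℝ}
    (hρ : 0 < ρ) (hc1 : 0 < c1) (h2c1 : 2*c1 ≤ ρ)
    {T : Set E3} (hTc : Type3Center T p)
    (hpwT : ∀ z ∈ T ∩ ball p ρ, Metric.infDist z E ≤ c1)
    {Z : Set E3}
    (hEZ : ∀ e ∈ E ∩ ball p (2*ρ), Metric.infDist e Z ≤ c2)
    (hc2 : 0 ≤ c2) (hδρ : 2*c1 + c2 ≤ δ*ρ) (hδ0 : 0 < δ) (hδ : δ ≤ 1/10000) :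
    (∀ a, Type3Center Z a → ‖p - a‖ ≤ 232*(δ*ρ)) ∧
    (MinimalCone Z → Z.Nonempty → ∃ a, Type3Center Z a) := by
  obtain ⟨R, ⟨f, v, hdet, hR⟩, hTeq, hceq⟩ := hTc
  have hvx : v = p := by rw [hceq, hR 0, map_zero, zero_add]
  have hTeq' : T = (fun w => f w + p) '' TBase := by
    rw [hTeq]
    rw [show R = fun w => f w + p from funext (fun w => by rw [hR w, hvx])]
  have hgrid : ∀ j k : Fin 4, j ≠ k → ∀ st tt : Fin 7,
      Metric.infDist (gpt f p ρ j k st tt) Z ≤ δ * ρ := by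
    intro j k hjk st tt
    have hmemT : gpt f p ρ j k st tt ∈ T := by
      rw [hTeq']; exact gpt_mem_T f p hρ hjk st tt
    have hmemB : gpt f p ρ j k st tt ∈ ball p ρ := gpt_mem_ball f p hρ j k st tt
    have h1 : Metric.infDist (gpt f p ρ j k st tt) E ≤ c1 := hpwT _ ⟨hmemT, hmemB⟩
    have h2 : Metric.infDist (gpt f p ρ j k st tt) E < 2*c1 := by linarith
    obtain ⟨e, heE, hde⟩ := (Metric.infDist_lt_iff hEne).1 h2
    have heB : e ∈ ball p (2*ρ) := by
      rw [mem_ball]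
      have t1 : dist e p ≤ dist e (gpt f p ρ j k st tt) + dist (gpt f p ρ j k st tt) p :=
        dist_triangle _ _ _
      have t2 : dist (gpt f p ρ j k st tt) p < ρ := mem_ball.1 hmemB
      have t3 : dist e (gpt f p ρ j k st tt) < 2*c1 := by rw [dist_comm]; exact hde
      linarith
    have h3 : Metric.infDist e Z ≤ c2 := hEZ e ⟨heE, heB⟩
    calc Metric.infDist (gpt f p ρ j k st tt) Z
        ≤ Metric.infDist e Z + dist (gpt f p ρ j k st tt) e :=
          Metric.infDist_le_infDist_add_dist
      _ ≤ c2 + 2*c1 := by linarith [hde]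
      _ ≤ δ*ρ := by linarith
  constructor
  · intro a hZa
    exact rigid_center f p ρ δ hρ hδ0 hδ Z a hZa hgrid
  · intro hmin hne
    exact rigid_type f p ρ δ hρ hδ0 hδ Z hmin hne hgrid

end Stmt13Aux

/-- Lemma 4.6: there is at most one point in `E₃ ∩ B(0,199/100)`. -/
theorem stmt13 (E : Set E3) (ε : ℝ) (hE : Standing E ε) :
    (Eset3 E ε ∩ ball (0 : E3) (199 / 100)).Subsingleton := by
  classical
  intro x hx y hy
  by_contra hne
  have hε : 0 < ε := hE.2.2.1
  have hε25 : ε ≤ 1/10^25 := by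
    have h1 := hE.2.2.2.1
    have h10 : ((10:ℝ))^(-25:ℤ) = 1/10^25 := by norm_num
    rw [h10] at h1
    linarith
  have hΛε : Stmt13Aux.bigL*ε ≤ 1/10^15 := by
    have h1 : Stmt13Aux.bigL*ε ≤ Stmt13Aux.bigL*(1/10^25) :=
      mul_le_mul_of_nonneg_left hε25 Stmt13Aux.bigL_pos.le
    have h2 : Stmt13Aux.bigL*(1/10^25) = 1/10^15 := by unfold Stmt13Aux.bigL; norm_num
    linarith
  have hΛ1000 : 1000*ε ≤ Stmt13Aux.bigL*ε := mul_le_mul_of_nonneg_right Stmt13Aux.bigL_ge hε.le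
  have hEne : E.Nonempty := ⟨0, hE.2.1⟩
  have hx99 : ‖x‖ < 199/100 := by
    have h := hx.2; rwa [mem_ball, dist_zero_right] at h
  have hy99 : ‖y‖ < 199/100 := by
    have h := hy.2; rwa [mem_ball, dist_zero_right] at h
  have hd : 0 < dist x y := dist_pos.2 hne
  rcases le_or_gt (1/1000) (dist x y) with hcase | hcase
  · -- the two points are far apart : compare both with a single cone around the origin
    obtain ⟨Tx, hTxc, hTx⟩ := Stmt13Aux.prop_up hE hx.1 hx99
      (by norm_num : (0:ℝ) < 1/500) (by norm_num)
    obtain ⟨Ty, hTyc, hTy⟩ := Stmt13Aux.prop_up hE hy.1 hy99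
      (by norm_num : (0:ℝ) < 1/500) (by norm_num)
    have h0b : (0:E3) ∈ ball (0:E3) 2 := mem_ball_self (by norm_num)
    obtain ⟨Z, hZmin, h0Z, hZpw⟩ := Stmt13Aux.standing_pw hE hE.2.1 h0b
      (by norm_num : (0:ℝ) < 399/200) (ball_subset_ball (by norm_num))
    have hZne : Z.Nonempty := ⟨0, h0Z⟩
    have hEZgen : ∀ p : E3, ‖p‖ < 199/100 →
        ∀ e ∈ E ∩ ball p (2*(1/500)), Metric.infDist e Z ≤ ε*(399/200) := by
      intro p hp e he
      apply hZpw.1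
      refine ⟨he.1, ?_⟩
      rw [mem_ball, dist_zero_right]
      have h1 : dist e p < 2*(1/500) := mem_ball.1 he.2
      rw [dist_eq_norm] at h1
      have h2 : ‖e‖ ≤ ‖e - p‖ + ‖p‖ := by
        calc ‖e‖ = ‖(e - p) + p‖ := by rw [sub_add_cancel]
          _ ≤ ‖e - p‖ + ‖p‖ := norm_add_le _ _
      linarith
    have hδρA : 2*(Stmt13Aux.bigL*ε*(1/500)) + ε*(399/200)
        ≤ (3*Stmt13Aux.bigL*ε)*(1/500) := by linarith
    have hδA : 3*Stmt13Aux.bigL*ε ≤ 1/10000 := by linarith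
    have hposA : 0 < Stmt13Aux.bigL*ε*(1/500) :=
      mul_pos (mul_pos Stmt13Aux.bigL_pos hε) (by norm_num)
    have hposA2 : (0:ℝ) ≤ ε*(399/200) := (mul_pos hε (by norm_num)).le
    have hposA3 : 0 < 3*Stmt13Aux.bigL*ε := mul_pos (mul_pos (by norm_num) Stmt13Aux.bigL_pos) hε
    have hmx := Stmt13Aux.match_grid (δ := 3*Stmt13Aux.bigL*ε) hEne
      (by norm_num : (0:ℝ) < 1/500) hposA (by linarith)
      hTxc hTx.2 (hEZgen x hx99) hposA2 hδρA hposA3 hδA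
    have hmy := Stmt13Aux.match_grid (δ := 3*Stmt13Aux.bigL*ε) hEne
      (by norm_num : (0:ℝ) < 1/500) hposA (by linarith)
      hTyc hTy.2 (hEZgen y hy99) hposA2 hδρA hposA3 hδA
    obtain ⟨a, hZa⟩ := hmx.2 hZmin hZne
    have hbx : ‖x - a‖ ≤ 232*((3*Stmt13Aux.bigL*ε)*(1/500)) := hmx.1 a hZa
    have hby : ‖y - a‖ ≤ 232*((3*Stmt13Aux.bigL*ε)*(1/500)) := hmy.1 a hZa
    have htri : dist x y ≤ ‖x - a‖ + ‖y - a‖ := by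
      rw [dist_eq_norm]
      calc ‖x - y‖ = ‖(x - a) - (y - a)‖ := by rw [show x - y = (x-a)-(y-a) by abel]
        _ ≤ ‖x-a‖ + ‖y-a‖ := norm_sub_le _ _
    have k2 : 232*((3*Stmt13Aux.bigL*ε)*(1/500)) = (696/500)*(Stmt13Aux.bigL*ε) := by ring
    rw [k2] at hbx hby
    linarith
  · -- the two points are close : compare the small `T` at `y` with the larger one at `x`
    obtain ⟨Tx, hTxc, hTx⟩ := Stmt13Aux.prop_up hE hx.1 hx99
      (show (0:ℝ) < 4*dist x y by linarith) (by linarith)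
    obtain ⟨Ty, hTyc, hTy⟩ := Stmt13Aux.prop_up hE hy.1 hy99
      (show (0:ℝ) < dist x y/2 by linarith) (by linarith)
    have hEZ : ∀ e ∈ E ∩ ball y (2*(dist x y/2)),
        Metric.infDist e Tx ≤ Stmt13Aux.bigL*ε*(4*dist x y) := by
      intro e he
      apply hTx.1
      refine ⟨he.1, ?_⟩
      rw [mem_ball]
      have h1 : dist e y < 2*(dist x y/2) := mem_ball.1 he.2
      have h2 : dist e x ≤ dist e y + dist y x := dist_triangle _ _ _
      rw [dist_comm y x] at h2
      linarith
    have hdd : (Stmt13Aux.bigL*ε)*(dist x y) ≤ (1/10^15)*(dist x y) :=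
      mul_le_mul_of_nonneg_right hΛε hd.le
    have h2c1B : 2*(Stmt13Aux.bigL*ε*(dist x y/2)) ≤ dist x y/2 := by
      have k : 2*(Stmt13Aux.bigL*ε*(dist x y/2)) = (Stmt13Aux.bigL*ε)*(dist x y) := by ring
      rw [k]
      linarith
    have hδρB : 2*(Stmt13Aux.bigL*ε*(dist x y/2)) + Stmt13Aux.bigL*ε*(4*dist x y)
        ≤ (10*Stmt13Aux.bigL*ε)*(dist x y/2) := le_of_eq (by ring)
    have hδB : 10*Stmt13Aux.bigL*ε ≤ 1/10000 := by linarith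
    have hposB : 0 < Stmt13Aux.bigL*ε*(dist x y/2) :=
      mul_pos (mul_pos Stmt13Aux.bigL_pos hε) (by linarith)
    have hposB2 : (0:ℝ) ≤ Stmt13Aux.bigL*ε*(4*dist x y) :=
      (mul_pos (mul_pos Stmt13Aux.bigL_pos hε) (by linarith)).le
    have hposB3 : 0 < 10*Stmt13Aux.bigL*ε :=
      mul_pos (mul_pos (by norm_num) Stmt13Aux.bigL_pos) hε
    have hm := Stmt13Aux.match_grid (δ := 10*Stmt13Aux.bigL*ε) hEne
      (show (0:ℝ) < dist x y/2 by linarith) hposB h2c1B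
      hTyc hTy.2 hEZ hposB2 hδρB hposB3 hδB
    have hb : ‖y - x‖ ≤ 232*((10*Stmt13Aux.bigL*ε)*(dist x y/2)) := hm.1 x hTxc
    have hxy : ‖y - x‖ = dist x y := by rw [← dist_eq_norm, dist_comm]
    rw [hxy] at hb
    have k2 : 232*((10*Stmt13Aux.bigL*ε)*(dist x y/2)) = 1160*((Stmt13Aux.bigL*ε)*(dist x y)) := by
      ring
    rw [k2] at hb
    linarith
end
end
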